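/- Let X be a path-connected ANR, r ≥ 2, let A ⊆ X^r be closed, and let Φ : A × [0,1] → X^r be a homotopy with Φ(a,0) = a for all a ∈ A (a deformation of A). If Φ_1(A) is closed, where Φ_1 = Φ(·,1), then TC_{r,X}(Φ_1(A)) ≥ TC_{r,X}(A). -/

import Mathlib

/-!
A section of the path fibration over a closed set `C ⊆ X^r` extends to an open neighbourhood:
on `C × I ∪ X^r × {t₀, …, t_{r-1}}` the section and the coordinate projections glue to one map,
and the ANR property extends it to a tube around `C`.

Given an open cover of `Φ₁(A)` by sets `V i` carrying sections, pull it back along `Φ₁` and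
shrink it to a closed cover `K i` of `A`. Over `K i` a section is obtained by concatenating,
between consecutive nodes, the track of `Φ` from `a k` to `Φ₁(a) k`, the planned path of `Φ₁(a)`,
and the track of `Φ` backwards to `a (k+1)`. Extending these sections to open neighbourhoods gives
a cover of `A` of the same size.
-/

open unitInterval

/-- The `r` equidistant time points `k/(r-1)` in the unit interval. -/
noncomputable def evalPt (r : ℕ) (hr : 2 ≤ r) (k : Fin r) : unitInterval :=
  ⟨((k : ℕ) : ℝ) / ((r : ℝ) - 1), by
    have h2 : (2 : ℝ) ≤ (r : ℝ) := by exact_mod_cast hr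
    have hk : ((k : ℕ) : ℝ) + 1 ≤ (r : ℝ) := by exact_mod_cast k.isLt
    have hpos : (0 : ℝ) < (r : ℝ) - 1 := by linarith
    refine ⟨div_nonneg (by positivity) hpos.le, ?_⟩
    rw [div_le_one hpos]; linarith⟩

/-- The path fibration `p_r : PX → X^r`, evaluation at `r` equidistant points. -/
noncomputable def pathEval {X : Type*} [TopologicalSpace X] (r : ℕ) (hr : 2 ≤ r)
    (γ : C(unitInterval, X)) : Fin r → X := fun k => γ (evalPt r hr k)

/-- `A ⊆ X^r` admits a continuous sequential motion planner, i.e. a continuous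
section of `p_r` over `A`. -/
def HasMotionPlanner {X : Type*} [TopologicalSpace X] (r : ℕ) (hr : 2 ≤ r)
    (A : Set (Fin r → X)) : Prop :=
  ∃ s : A → C(unitInterval, X), Continuous s ∧
    ∀ a : A, pathEval r hr (s a) = (a : Fin r → X)

/-- The `r`-th sequential subspace complexity `TC_{r,X}(A)`: the minimal number `n`
of open subsets of `X^r` covering `A`, each admitting a continuous sequential
motion planner; `∞` if there is no such `n`. -/
noncomputable def seqTC {X : Type*} [TopologicalSpace X] (r : ℕ) (hr : 2 ≤ r)
    (A : Set (Fin r → X)) : ℕ∞ :=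
  sInf ((fun n : ℕ => (n : ℕ∞)) '' {n : ℕ | ∃ U : Fin n → Set (Fin r → X),
    (∀ i, IsOpen (U i)) ∧ A ⊆ (⋃ i, U i) ∧ ∀ i, HasMotionPlanner r hr (U i)})

universe u

/-- A metrizable space `Y` is an absolute neighborhood retract (ANR) if every
continuous map from a closed subset of a metrizable space into `Y` extends
continuously to an open neighborhood. -/
def IsANR (Y : Type u) [TopologicalSpace Y] : Prop :=
  TopologicalSpace.MetrizableSpace Y ∧
  ∀ (T : Type u) (_ : TopologicalSpace T), TopologicalSpace.MetrizableSpace T →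
    ∀ (A : Set T), IsClosed A → ∀ f : C(A, Y),
      ∃ (U : Set T) (_ : IsOpen U) (hAU : A ⊆ U) (g : C(U, Y)),
        ∀ a : A, g (Set.inclusion hAU a) = f a

open Set

section Concatenation

variable {Z X : Type*}

noncomputable def pieceIndex {n : ℕ} (hn : 0 < n) (t : I) : Fin n :=
  ⟨min ⌊n * (t : ℝ)⌋₊ (n - 1), by omega⟩

lemma pieceIndex_le_mul {n : ℕ} (hn : 0 < n) (t : I) : (pieceIndex hn t : ℝ) ≤ n * (t : ℝ) :=
  (Nat.cast_le.2 (min_le_left _ _)).trans (Nat.floor_le (by have := t.2.1; positivity))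

lemma mul_le_pieceIndex_add_one {n : ℕ} (hn : 0 < n) (t : I) :
    (n : ℝ) * (t : ℝ) ≤ pieceIndex hn t + 1 := by
  rcases le_total ⌊n * (t : ℝ)⌋₊ (n - 1) with h | h
  · simpa [pieceIndex, h] using (Nat.lt_floor_add_one _).le
  · have : ((n - 1 : ℕ) : ℝ) + 1 = n := by rw [Nat.cast_sub hn]; ring
    simpa [pieceIndex, h, this] using mul_le_of_le_one_right (Nat.cast_nonneg n) t.2.2

/-- The family `Q k` is run on the interval `[k/n, (k+1)/n]`. -/
noncomputable def familyConcat {n : ℕ} (hn : 0 < n) (Q : Fin n → Z × I → X) (p : Z × I) : X :=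
  Q (pieceIndex hn p.2) (p.1, projIcc 0 1 zero_le_one (n * p.2 - pieceIndex hn p.2))

def EndpointsAgree {n : ℕ} (Q : Fin n → Z × I → X) : Prop :=
  ∀ (k : Fin n) (hk : (k : ℕ) + 1 < n) z, Q k (z, 1) = Q ⟨k + 1, hk⟩ (z, 0)

variable {n : ℕ} (hn : 0 < n) {Q : Fin n → Z × I → X}

lemma familyConcat_eq (hQ : EndpointsAgree Q) (k : Fin n) (z : Z) {t : I}
    (h₁ : (k : ℝ) ≤ n * (t : ℝ)) (h₂ : n * (t : ℝ) ≤ k + 1) :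
    familyConcat hn Q (z, t) = Q k (z, projIcc 0 1 zero_le_one (n * (t : ℝ) - k)) := by
  have h₀ : (0 : ℝ) ≤ n * (t : ℝ) := (Nat.cast_nonneg _).trans h₁
  rcases h₂.lt_or_eq with h₂ | h₂
  · have : pieceIndex hn t = k :=
      Fin.ext (by simp only [pieceIndex, (Nat.floor_eq_iff h₀).2 ⟨h₁, h₂⟩]; omega)
    rw [familyConcat, this]
  have hfloor : ⌊n * (t : ℝ)⌋₊ = k + 1 := by rw [h₂]; exact_mod_cast Nat.floor_natCast _
  by_cases hk : (k : ℕ) + 1 < n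
  · have : pieceIndex hn t = ⟨k + 1, hk⟩ := Fin.ext (by simp only [pieceIndex, hfloor]; omega)
    rw [familyConcat, this]
    simp [h₂, hQ k hk z]
  · have : pieceIndex hn t = k := Fin.ext (by simp only [pieceIndex, hfloor]; omega)
    rw [familyConcat, this]

lemma familyConcat_of_mul_eq (hQ : EndpointsAgree Q) (k : Fin n) (z : Z) {t : I}
    (ht : n * (t : ℝ) = k) :
    familyConcat hn Q (z, t) = Q k (z, 0) := by
  rw [familyConcat_eq hn hQ k z ht.ge (by linarith), ht, sub_self, projIcc_left]
  rfl

lemma familyConcat_of_mul_eq_add_one (hQ : EndpointsAgree Q) (k : Fin n) (z : Z) {t : I}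
    (ht : n * (t : ℝ) = k + 1) :
    familyConcat hn Q (z, t) = Q k (z, 1) := by
  rw [familyConcat_eq hn hQ k z (by linarith) ht.le, ht, add_sub_cancel_left, projIcc_right]
  rfl

variable [TopologicalSpace Z] [TopologicalSpace X]

lemma continuous_familyConcat (hQ : EndpointsAgree Q) (hQc : ∀ k, Continuous (Q k)) :
    Continuous (familyConcat hn Q) := by
  let piece (k : Fin n) : Set (Z × I) := {p | (k : ℝ) ≤ n * (p.2 : ℝ) ∧ n * (p.2 : ℝ) ≤ k + 1}
  have hmul : Continuous fun p : Z × I => (n : ℝ) * (p.2 : ℝ) := by fun_prop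
  refine (locallyFinite_of_finite piece).continuous ?_ (fun k => ?_) (fun k => ?_)
  · exact eq_univ_of_forall fun p => mem_iUnion.2
      ⟨pieceIndex hn p.2, pieceIndex_le_mul hn p.2, mul_le_pieceIndex_add_one hn p.2⟩
  · exact (isClosed_le continuous_const hmul).inter (isClosed_le hmul continuous_const)
  · have hc : Continuous fun p : Z × I =>
        Q k (p.1, projIcc 0 1 zero_le_one (n * (p.2 : ℝ) - k)) :=
      (hQc k).comp (continuous_fst.prodMk (continuous_projIcc.comp (hmul.sub continuous_const)))
    refine hc.continuousOn.congr ?_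
    rintro ⟨z, t⟩ ⟨h₁, h₂⟩
    exact familyConcat_eq hn hQ k z h₁ h₂

end Concatenation

section MotionPlanner

variable {X : Type*} [TopologicalSpace X] {r : ℕ} (hr : 2 ≤ r)

lemma evalPt_injective : Function.Injective (evalPt r hr) := by
  intro j k h
  have hr' : (r : ℝ) - 1 ≠ 0 := by
    have : (2 : ℝ) ≤ r := by exact_mod_cast hr
    linarith
  have : (j : ℝ) / ((r : ℝ) - 1) = k / ((r : ℝ) - 1) := congrArg Subtype.val h
  exact Fin.ext (by exact_mod_cast (div_left_inj' hr').1 this)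

lemma hasMotionPlanner_of_continuous {U : Set (Fin r → X)} (F : U × I → X) (hF : Continuous F)
    (hFeval : ∀ (a : U) k, F (a, evalPt r hr k) = (a : Fin r → X) k) :
    HasMotionPlanner r hr U :=
  ⟨ContinuousMap.curry ⟨F, hF⟩, (ContinuousMap.curry ⟨F, hF⟩).continuous,
    fun a => funext (hFeval a)⟩

theorem hasMotionPlanner_of_homotopy {U : Set (Fin r → X)} (G : U × I → X) (hG : Continuous G)
    (D : Fin r → U × I → X) (hD : ∀ k, Continuous (D k))
    (hD₀ : ∀ k a, D k (a, 0) = (a : Fin r → X) k)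
    (hD₁ : ∀ k a, D k (a, 1) = G (a, evalPt r hr k)) :
    HasMotionPlanner r hr U := by
  obtain ⟨n, rfl⟩ : ∃ n, r = n + 2 := ⟨r - 2, by omega⟩
  have hnode (k : Fin (n + 2)) : projIcc 0 1 zero_le_one ((k : ℝ) / (n + 1)) = evalPt _ hr k := by
    rw [← projIcc_val zero_le_one (evalPt _ hr k)]
    congr 1
    simp only [evalPt]
    push_cast
    ring
  have hmul (k : Fin (n + 2)) : ((n + 1 : ℕ) : ℝ) * evalPt _ hr k = k := by
    simp only [evalPt]
    push_cast
    rw [show (n : ℝ) + 2 - 1 = n + 1 by ring, mul_div_cancel₀ _ (by positivity)]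
  -- the `k`-th leg runs from `a k` to `G (a, t k)` along `D k`, follows `G a` to `G (a, t (k+1))`,
  -- and returns to `a (k+1)` along `D (k+1)` backwards
  let leg (k : Fin (n + 1)) : Fin 3 → U × I → X :=
    ![D k.castSucc,
      fun p => G (p.1, projIcc 0 1 zero_le_one ((k + p.2) / (n + 1))),
      fun p => D k.succ (p.1, σ p.2)]
  have hleg (k : Fin (n + 1)) : EndpointsAgree (leg k) := by
    intro j hj a
    fin_cases j
    · simp [leg, hD₁, ← hnode]
    · simp [leg, hD₁, ← hnode]
    · simp at hj
  have hlegc (k : Fin (n + 1)) (j : Fin 3) : Continuous (leg k j) := by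
    fin_cases j
    · exact hD _
    · exact hG.comp (continuous_fst.prodMk (continuous_projIcc.comp (by fun_prop)))
    · exact (hD _).comp (continuous_fst.prodMk (continuous_symm.comp continuous_snd))
  let Q (k : Fin (n + 1)) : U × I → X := familyConcat three_pos (leg k)
  have hQ₀ (k : Fin (n + 1)) (a : U) : Q k (a, 0) = (a : Fin (n + 2) → X) k.castSucc := by
    simp only [Q]
    rw [familyConcat_of_mul_eq _ (hleg k) 0 a (t := 0) (by norm_num)]
    simp [leg, hD₀]
  have hQ₁ (k : Fin (n + 1)) (a : U) : Q k (a, 1) = (a : Fin (n + 2) → X) k.succ := by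
    simp only [Q]
    rw [familyConcat_of_mul_eq_add_one _ (hleg k) 2 a (t := 1) (by norm_num)]
    simp [leg, hD₀]
  have hQ : EndpointsAgree Q := by
    intro k hk a
    rw [hQ₀, hQ₁]
    rfl
  refine hasMotionPlanner_of_continuous hr (familyConcat n.succ_pos Q)
    (continuous_familyConcat _ hQ fun k => continuous_familyConcat _ (hleg k) (hlegc k))
    fun a k => ?_
  induction k using Fin.lastCases with
  | last =>
    rw [familyConcat_of_mul_eq_add_one _ hQ (Fin.last n) a (by rw [hmul]; simp), hQ₁,
      Fin.succ_last]
  | cast k => rw [familyConcat_of_mul_eq _ hQ k a (by rw [hmul]; simp), hQ₀]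

end MotionPlanner

theorem HasMotionPlanner.of_deformation {X : Type*} [TopologicalSpace X] {r : ℕ} {hr : 2 ≤ r}
    {C V : Set (Fin r → X)} (hV : HasMotionPlanner r hr V) (H : C × I → (Fin r → X))
    (hH : Continuous H) (hH₀ : ∀ c, H (c, 0) = c) (hH₁ : ∀ c, H (c, 1) ∈ V) :
    HasMotionPlanner r hr C := by
  obtain ⟨s, hs, hsec⟩ := hV
  refine hasMotionPlanner_of_homotopy hr (fun p => s ⟨H (p.1, 1), hH₁ p.1⟩ p.2) ?_
    (fun k p => H p k) (fun k => (continuous_apply k).comp hH) (fun k c => by rw [hH₀])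
    fun k c => (congrFun (hsec ⟨H (c, 1), hH₁ c⟩) k).symm
  exact ((hs.comp ((hH.comp (continuous_id.prodMk continuous_const)).subtype_mk _)).comp
    continuous_fst).eval continuous_snd

lemma isOpen_setOf_forall_mem_of_compactSpace {Y K : Type*} [TopologicalSpace Y]
    [TopologicalSpace K] [CompactSpace K] {U : Set (Y × K)} (hU : IsOpen U) :
    IsOpen {y | ∀ t, (y, t) ∈ U} := by
  have : {y | ∀ t, (y, t) ∈ U} = (Prod.fst '' Uᶜ)ᶜ := by ext; simp
  rw [this]
  exact (isClosedMap_fst_of_compactSpace _ hU.isClosed_compl).isOpen_compl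

lemma IsANR.exists_continuousOn_extension {X : Type u} [TopologicalSpace X] (hX : IsANR X)
    {T : Type u} [TopologicalSpace T] [TopologicalSpace.MetrizableSpace T] {A : Set T}
    (hA : IsClosed A) {f : T → X} (hf : ContinuousOn f A) :
    ∃ U, IsOpen U ∧ A ⊆ U ∧ ∃ g : T → X, ContinuousOn g U ∧ EqOn g f A := by
  classical
  obtain ⟨U, hU, hAU, g, hg⟩ := hX.2 T _ inferInstance A hA ⟨A.domRestrict f, hf.domRestrict⟩
  refine ⟨U, hU, hAU, fun x => if h : x ∈ U then g ⟨x, h⟩ else f x, ?_, fun x hx => ?_⟩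
  · rw [continuousOn_iff_continuous_domRestrict]
    convert g.continuous
    ext x
    simp [x.2]
  · simpa [hAU hx] using hg ⟨x, hx⟩

theorem HasMotionPlanner.exists_isOpen_superset {X : Type u} [TopologicalSpace X] (hX : IsANR X)
    {r : ℕ} {hr : 2 ≤ r} {C : Set (Fin r → X)} (hC : IsClosed C)
    (hCp : HasMotionPlanner r hr C) :
    ∃ O, IsOpen O ∧ C ⊆ O ∧ HasMotionPlanner r hr O := by
  classical
  have := hX.1
  have : Nonempty (Fin r) := ⟨⟨0, by omega⟩⟩
  obtain ⟨s, hs, hsec⟩ := hCp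
  -- the planner on `C × I`, the `k`-th coordinate on the slice `X^r × {t k}`
  let f : (Fin r → X) × I → X := fun p =>
    if h : p.1 ∈ C then s ⟨p.1, h⟩ p.2 else p.1 (Function.invFun (evalPt r hr) p.2)
  have hf_node (y : Fin r → X) (k : Fin r) : f (y, evalPt r hr k) = y k := by
    by_cases h : y ∈ C
    · simp only [f, dif_pos h]
      exact congrFun (hsec ⟨y, h⟩) k
    · simp [f, h, Function.leftInverse_invFun (evalPt_injective hr) k]
  have hCI : IsClosed (C ×ˢ (univ : Set I)) := hC.prod isClosed_univ
  have hslice (k : Fin r) : IsClosed ((univ : Set (Fin r → X)) ×ˢ {evalPt r hr k}) :=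
    isClosed_univ.prod isClosed_singleton
  have hf : ContinuousOn f (C ×ˢ univ ∪ ⋃ k, univ ×ˢ {evalPt r hr k}) := by
    refine ContinuousOn.union_of_isClosed ?_
      ((locallyFinite_of_finite _).continuousOn_iUnion hslice fun k => ?_) hCI
      (isClosed_iUnion_of_finite hslice)
    · have : Continuous fun q : ↥(C ×ˢ (univ : Set I)) => s ⟨q.1.1, q.2.1⟩ q.1.2 :=
        (hs.comp ((continuous_fst.comp continuous_subtype_val).subtype_mk _)).eval
          (continuous_snd.comp continuous_subtype_val)
      rw [continuousOn_iff_continuous_domRestrict]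
      convert this with q
      simp [f, q.2.1]
    · refine ((continuous_apply k).comp continuous_fst).continuousOn.congr ?_
      rintro ⟨y, t⟩ ⟨-, rfl⟩
      exact hf_node y k
  obtain ⟨U, hU, hAU, g, hg, hgf⟩ :=
    hX.exists_continuousOn_extension (hCI.union (isClosed_iUnion_of_finite hslice)) hf
  refine ⟨{y | ∀ t, (y, t) ∈ U}, isOpen_setOf_forall_mem_of_compactSpace hU,
    fun y hy t => hAU (Or.inl ⟨hy, trivial⟩), ?_⟩
  refine hasMotionPlanner_of_continuous hr (fun p => g (p.1, p.2)) ?_ fun y k => ?_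
  · exact hg.comp_continuous ((continuous_subtype_val.comp continuous_fst).prodMk continuous_snd)
      fun p => p.1.2 p.2
  · rw [← hf_node y k]
    exact hgf (Or.inr (mem_iUnion.2 ⟨k, trivial, rfl⟩))

theorem exists_planner_cover_of_deformation {X : Type u} [TopologicalSpace X] (hX : IsANR X)
    {r : ℕ} {hr : 2 ≤ r} {A : Set (Fin r → X)} (hA : IsClosed A) (Φ : A × I → (Fin r → X))
    (hΦ : Continuous Φ) (hΦ₀ : ∀ a, Φ (a, 0) = a) {n : ℕ} {V : Fin n → Set (Fin r → X)}
    (hVo : ∀ i, IsOpen (V i)) (hAV : range (fun a => Φ (a, 1)) ⊆ ⋃ i, V i)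
    (hV : ∀ i, HasMotionPlanner r hr (V i)) :
    ∃ U : Fin n → Set (Fin r → X),
      (∀ i, IsOpen (U i)) ∧ A ⊆ ⋃ i, U i ∧ ∀ i, HasMotionPlanner r hr (U i) := by
  have := hX.1
  have hΦ₁ : Continuous fun a => Φ (a, 1) := hΦ.comp (continuous_id.prodMk continuous_const)
  choose O hO hOV using fun i => isOpen_induced_iff.1 ((hVo i).preimage hΦ₁)
  have hAO : A ⊆ ⋃ i, O i := fun x hx => by
    obtain ⟨i, hi⟩ := mem_iUnion.1 (hAV ⟨⟨x, hx⟩, rfl⟩)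
    exact mem_iUnion.2 ⟨i, show ⟨x, hx⟩ ∈ Subtype.val ⁻¹' O i from (hOV i).symm ▸ hi⟩
  obtain ⟨K, hAK, hK, hKO⟩ :=
    exists_subset_iUnion_closed_subset hA hO (fun _ _ => toFinite _) hAO
  have hKA (i : Fin n) : HasMotionPlanner r hr (K i ∩ A) := by
    refine (hV i).of_deformation (fun p => Φ (⟨p.1, p.1.2.2⟩, p.2)) ?_ (fun c => hΦ₀ _)
      fun c => ?_
    · exact hΦ.comp (((continuous_subtype_val.comp continuous_fst).subtype_mk _).prodMk
        continuous_snd)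
    · have : (⟨c, c.2.2⟩ : A) ∈ Subtype.val ⁻¹' O i := hKO i c.2.1
      rwa [hOV i] at this
  choose U hU hKU hUp using fun i => (hKA i).exists_isOpen_superset hX ((hK i).inter hA)
  refine ⟨U, hU, fun x hx => ?_, hUp⟩
  obtain ⟨i, hi⟩ := mem_iUnion.1 (hAK hx)
  exact mem_iUnion.2 ⟨i, hKU i ⟨hi, hx⟩⟩

theorem stmt6_general {X : Type u} [TopologicalSpace X] (hX : IsANR X)
    (r : ℕ) (hr : 2 ≤ r) (A : Set (Fin r → X)) (hA : IsClosed A)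
    (Φ : ↥A × unitInterval → (Fin r → X)) (hΦ : Continuous Φ)
    (h0 : ∀ a : ↥A, Φ (a, 0) = (a : Fin r → X)) :
    seqTC r hr A ≤ seqTC r hr (Set.range fun a : ↥A => Φ (a, 1)) := by
  refine sInf_le_sInf (image_mono ?_)
  rintro n ⟨V, hVo, hAV, hV⟩
  exact exists_planner_cover_of_deformation hX hA Φ hΦ h0 hVo hAV hV

theorem stmt6 {X : Type u} [TopologicalSpace X] [PathConnectedSpace X] (hX : IsANR X)
    (r : ℕ) (hr : 2 ≤ r) (A : Set (Fin r → X)) (hA : IsClosed A)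
    (Φ : ↥A × unitInterval → (Fin r → X)) (hΦ : Continuous Φ)
    (h0 : ∀ a : ↥A, Φ (a, 0) = (a : Fin r → X))
    (hclosed : IsClosed (Set.range fun a : ↥A => Φ (a, 1))) :
    seqTC r hr A ≤ seqTC r hr (Set.range fun a : ↥A => Φ (a, 1)) :=
  stmt6_general hX r hr A hA Φ hΦ h0
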